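/- The polynomial V(x,y) = 1 + (2a₁ - a₄)x + (2a₁ + a₄)y - a₁a₄x² - a₄²xy + a₁a₄y² is an inverse integrating factor of the planar system ẋ = -y + a₁x² - a₁y² + a₄xy, ẏ = x + a₁x² - a₁y² + a₄xy; moreover V(0,0) = 1 ≠ 0. -/

import Mathlib

noncomputable def P7 (a₁ a₄ x y : ℝ) : ℝ := -y + a₁*x^2 - a₁*y^2 + a₄*x*y
noncomputable def Q7 (a₁ a₄ x y : ℝ) : ℝ := x + a₁*x^2 - a₁*y^2 + a₄*x*y
noncomputable def V7 (a₁ a₄ x y : ℝ) : ℝ :=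
  1 + (2*a₁ - a₄)*x + (2*a₁ + a₄)*y - a₁*a₄*x^2 - a₄^2*x*y + a₁*a₄*y^2

/- Each of P, Q, V is quadratic in each variable separately, so all four partial derivatives
come from the derivative of a one-variable quadratic; the identity is then polynomial. -/

theorem hasDerivAt_quadratic (a b c x : ℝ) :
    HasDerivAt (fun s => a * s ^ 2 + b * s + c) (2 * a * x + b) x :=
  ((((hasDerivAt_pow 2 x).const_mul a).add ((hasDerivAt_id' x).const_mul b)).add_const c).congr_deriv
    (by ring)

theorem deriv_quadratic (a b c x : ℝ) :
    deriv (fun s => a * s ^ 2 + b * s + c) x = 2 * a * x + b :=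
  (hasDerivAt_quadratic a b c x).deriv

section

variable (a₁ a₄ x y : ℝ)

theorem deriv_P7_fst : deriv (fun s => P7 a₁ a₄ s y) x = 2 * a₁ * x + a₄ * y := by
  have h : (fun s => P7 a₁ a₄ s y) = fun s => a₁ * s ^ 2 + a₄ * y * s + (-y - a₁ * y ^ 2) := by
    funext s; simp only [P7]; ring
  rw [h, deriv_quadratic]

theorem deriv_Q7_snd : deriv (fun s => Q7 a₁ a₄ x s) y = -2 * a₁ * y + a₄ * x := by
  have h : (fun s => Q7 a₁ a₄ x s) = fun s => -a₁ * s ^ 2 + a₄ * x * s + (x + a₁ * x ^ 2) := by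
    funext s; simp only [Q7]; ring
  rw [h, deriv_quadratic]; ring

theorem deriv_V7_fst :
    deriv (fun s => V7 a₁ a₄ s y) x = 2 * a₁ - a₄ - 2 * a₁ * a₄ * x - a₄ ^ 2 * y := by
  have h : (fun s => V7 a₁ a₄ s y) = fun s =>
      -(a₁ * a₄) * s ^ 2 + (2 * a₁ - a₄ - a₄ ^ 2 * y) * s
        + (1 + (2 * a₁ + a₄) * y + a₁ * a₄ * y ^ 2) := by
    funext s; simp only [V7]; ring
  rw [h, deriv_quadratic]; ring

theorem deriv_V7_snd :
    deriv (fun s => V7 a₁ a₄ x s) y = 2 * a₁ + a₄ - a₄ ^ 2 * x + 2 * a₁ * a₄ * y := by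
  have h : (fun s => V7 a₁ a₄ x s) = fun s =>
      a₁ * a₄ * s ^ 2 + (2 * a₁ + a₄ - a₄ ^ 2 * x) * s
        + (1 + (2 * a₁ - a₄) * x - a₁ * a₄ * x ^ 2) := by
    funext s; simp only [V7]; ring
  rw [h, deriv_quadratic]; ring

end

/-- V is an inverse integrating factor and V(0,0) = 1 ≠ 0. -/
theorem stmt_7 (a₁ a₄ : ℝ) :
    (∀ x y : ℝ,
      P7 a₁ a₄ x y * deriv (fun s => V7 a₁ a₄ s y) x
      + Q7 a₁ a₄ x y * deriv (fun s => V7 a₁ a₄ x s) y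
      = (deriv (fun s => P7 a₁ a₄ s y) x + deriv (fun s => Q7 a₁ a₄ x s) y)
          * V7 a₁ a₄ x y)
    ∧ V7 a₁ a₄ 0 0 = 1 ∧ (1 : ℝ) ≠ 0 := by
  refine ⟨fun x y => ?_, by norm_num [V7], one_ne_zero⟩
  rw [deriv_V7_fst, deriv_V7_snd, deriv_P7_fst, deriv_Q7_snd]
  simp only [P7, Q7, V7]
  ring
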